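/- Let Ψ be obtained from Φ by reduction. If f₀ ∈ F_M minimizes the energy-Casimir functional H_C on F_M, then its induced spatial density ρ_{f₀} belongs to R_M and minimizes the reduced functional H_r on R_M. -/

import Mathlib

open MeasureTheory Filter Topology Set ENNReal

noncomputable section

/-- Physical space `ℝ³`. -/
abbrev R3 : Type := EuclideanSpace ℝ (Fin 3)

/-- Spatial density `ρ_f(x) = ∫ f(x,v) dv` induced by a phase-space density. -/
def spatialDensity (f : R3 × R3 → ℝ) (x : R3) : ℝ := ∫ v, f (x, v)

/-- Kinetic energy `E_kin(f) = (1/2)∫∫ |v|² f dv dx`. -/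
def Ekin (f : R3 × R3 → ℝ) : ℝ := (1/2) * ∫ p : R3 × R3, ‖p.2‖ ^ 2 * f p

/-- `D(σ) = ∫∫ σ(x)σ(y)/|x-y| dx dy`. -/
def Dpair (σ : R3 → ℝ) : ℝ := ∫ x, ∫ y, σ x * σ y / ‖x - y‖

/-- Potential energy `E_pot(ρ) = -(1/2)∫∫ ρ(x)ρ(y)/|x-y| dx dy`. -/
def Epot (ρ : R3 → ℝ) : ℝ := -(1/2) * Dpair ρ

/-- Casimir functional `C(f) = ∫∫ Φ(f) dv dx`. -/
def Casimir (Φ : ℝ → ℝ) (f : R3 × R3 → ℝ) : ℝ := ∫ p, Φ (f p)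

/-- Energy-Casimir functional `H_C = E_kin + E_pot + C`. -/
def HC (Φ : ℝ → ℝ) (f : R3 × R3 → ℝ) : ℝ :=
  Ekin f + Epot (spatialDensity f) + Casimir Φ f

/-- Membership in the constraint set `F_M`. -/
structure MemFM (Φ : ℝ → ℝ) (M : ℝ) (f : R3 × R3 → ℝ) : Prop where
  nonneg : ∀ p, 0 ≤ f p
  integrable : Integrable f
  mass : (∫ p, f p) = M
  kin_int : Integrable (fun p : R3 × R3 => ‖p.2‖ ^ 2 * f p)
  cas_int : Integrable (fun p => Φ (f p))

/-- The constraint set `F_M`. -/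
def FMset (Φ : ℝ → ℝ) (M : ℝ) : Set ((R3 × R3) → ℝ) := {f | MemFM Φ M f}

/-- Hypotheses (Φ1)-(Φ3) on the Casimir function `Φ`, with derivative `Φ'`
and growth exponents `k`, `k'`. -/
structure IsPhi (Φ Φ' : ℝ → ℝ) (k k' : ℝ) : Prop where
  zero : Φ 0 = 0
  deriv_zero : Φ' 0 = 0
  hasDeriv : ∀ s ∈ Ici (0:ℝ), HasDerivAt Φ (Φ' s) s
  derivCont : ContinuousOn Φ' (Ici 0)
  nonneg : ∀ s ∈ Ici (0:ℝ), 0 ≤ Φ s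
  sconvex : StrictConvexOn ℝ (Ici 0) Φ
  k_pos : 0 < k
  k_lt : k < 3/2
  k'_pos : 0 < k'
  k'_lt : k' < 3/2
  growth_large : ∃ C > 0, ∃ F₁ > 0, ∀ s, F₁ ≤ s → C * s ^ (1 + 1/k) ≤ Φ s
  growth_small : ∃ C > 0, ∃ F₂ > 0, ∀ s, 0 ≤ s → s ≤ F₂ → Φ s ≤ C * s ^ (1 + 1/k')

/-- Potential `U_ρ(x) = -∫ ρ(y)/|x-y| dy` induced by a spatial density. -/
def U0rho (ρ : R3 → ℝ) (x : R3) : ℝ := -∫ y, ρ y / ‖x - y‖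

/-- Particle energy `E(x,v) = (1/2)|v|² + U₀(x)` for the state `f₀`. -/
def Epart (f₀ : R3 × R3 → ℝ) (p : R3 × R3) : ℝ :=
  (1/2) * ‖p.2‖ ^ 2 + U0rho (spatialDensity f₀) p.1

/-- Reduced density function `Ψ(s)`, obtained from `Φ` by minimizing the sum of kinetic
energy density and Casimir density over all velocity profiles of total mass `s`. -/
def PsiOf (Φ : ℝ → ℝ) (s : ℝ) : ℝ :=
  sInf { r : ℝ | ∃ g : R3 → ℝ, (∀ v, 0 ≤ g v) ∧ Integrable g ∧ (∫ v, g v) = s ∧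
    Integrable (fun v => (1/2) * ‖v‖ ^ 2 * g v + Φ (g v)) ∧
    r = ∫ v, ((1/2) * ‖v‖ ^ 2 * g v + Φ (g v)) }

/-- Reduced functional `H_r(ρ) = ∫ Ψ(ρ) dx + E_pot(ρ)`. -/
def Hr (Ψ : ℝ → ℝ) (ρ : R3 → ℝ) : ℝ := (∫ x, Ψ (ρ x)) + Epot ρ

/-- Membership in the reduced constraint set `R_M`. -/
structure MemRM (Ψ : ℝ → ℝ) (M : ℝ) (ρ : R3 → ℝ) : Prop where
  nonneg : ∀ x, 0 ≤ ρ x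
  integrable : Integrable ρ
  mass : (∫ x, ρ x) = M
  psi_int : Integrable (fun x => Ψ (ρ x))

/-- The reduced constraint set `R_M`. -/
def RMset (Ψ : ℝ → ℝ) (M : ℝ) : Set (R3 → ℝ) := {ρ | MemRM Ψ M ρ}

/-- Hypotheses (Ψ1)-(Ψ3) on `Ψ`, with derivative `Ψ'` and growth exponents `n`, `n'`. -/
structure IsPsi (Ψ Ψ' : ℝ → ℝ) (n n' : ℝ) : Prop where
  zero : Ψ 0 = 0
  deriv_zero : Ψ' 0 = 0
  hasDeriv : ∀ s ∈ Ici (0:ℝ), HasDerivAt Ψ (Ψ' s) s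
  derivCont : ContinuousOn Ψ' (Ici 0)
  nonneg : ∀ s ∈ Ici (0:ℝ), 0 ≤ Ψ s
  sconvex : StrictConvexOn ℝ (Ici 0) Ψ
  n_pos : 0 < n
  n_lt : n < 3
  n'_pos : 0 < n'
  n'_lt : n' < 3
  growth_large : ∃ C > 0, ∃ s₁ > 0, ∀ s, s₁ ≤ s → C * s ^ (1 + 1/n) ≤ Ψ s
  growth_small : ∃ C > 0, ∃ s₂ > 0, ∀ s, 0 ≤ s → s ≤ s₂ → Ψ s ≤ C * s ^ (1 + 1/n')

/-- Relative "distance" `d(f,f₀) = ∫∫ [Φ(f) - Φ(f₀) + E (f - f₀)] dv dx`. -/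
def dVP (Φ : ℝ → ℝ) (f₀ f : R3 × R3 → ℝ) : ℝ :=
  ∫ p, (Φ (f p) - Φ (f₀ p) + Epart f₀ p * (f p - f₀ p))

/-!
Fiberwise, `f ∈ F_M` is a family of velocity profiles `f (x, ·)` of masses `ρ_f x`, each of
which has kinetic plus Casimir energy at least `Ψ (ρ_f x)` by the definition of `Ψ`. Integrating
in `x` gives `∫ Ψ(ρ_f) ≤ E_kin f + C f`, so `ρ_{f₀} ∈ R_M` and `H_r(ρ_{f₀}) ≤ H_C(f₀)`.
Conversely, any `ρ ∈ R_M` is `ρ_f` for some `f ∈ F_M` assembled from near-optimal profiles,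
with `H_C(f) ≤ β^(5/3) ∫ Ψ(ρ) + ε M + E_pot(ρ)` for arbitrary `β > 1`, `ε > 0`; the loss
`β^(5/3)` comes from choosing the profiles measurably in `x`. Minimality of `f₀` and
`β → 1`, `ε → 0` conclude.
-/

lemma ConvexOn.map_mul_le_mul_of_map_zero {φ : ℝ → ℝ} (hφ : ConvexOn ℝ (Ici 0) φ) (h0 : φ 0 = 0)
    {c t : ℝ} (hc0 : 0 ≤ c) (hc1 : c ≤ 1) (ht : 0 ≤ t) : φ (c * t) ≤ c * φ t := by
  simpa [h0] using
    hφ.2 (self_mem_Ici : (0:ℝ) ∈ Ici 0) ht (sub_nonneg.2 hc1) hc0 (sub_add_cancel 1 c)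

lemma ContinuousOn.comp_aestronglyMeasurable_of_nonneg {α : Type*} [MeasurableSpace α]
    {μ : Measure α} {φ : ℝ → ℝ} (hφ : ContinuousOn φ (Ici 0)) {g : α → ℝ} (hg0 : ∀ a, 0 ≤ g a)
    (hg : AEStronglyMeasurable g μ) : AEStronglyMeasurable (fun a => φ (g a)) μ := by
  have hcont : Continuous fun s : ℝ => φ (max s 0) :=
    hφ.comp_continuous (continuous_id.max continuous_const) fun s => le_max_right s 0
  simpa [max_eq_left (hg0 _)] using hcont.comp_aestronglyMeasurable hg

def energyDensity (Φ : ℝ → ℝ) (v : R3) (s : ℝ) : ℝ := (1/2) * ‖v‖ ^ 2 * s + Φ s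

section EnergyDensity

variable {Φ : ℝ → ℝ}

lemma energyDensity_nonneg (hnn : ∀ s ∈ Ici (0:ℝ), 0 ≤ Φ s) (v : R3) {s : ℝ} (hs : 0 ≤ s) :
    0 ≤ energyDensity Φ v s :=
  add_nonneg (by positivity) (hnn s hs)

lemma energyDensity_mul_le (hconv : ConvexOn ℝ (Ici 0) Φ) (h0 : Φ 0 = 0) (v : R3) {c s : ℝ}
    (hc0 : 0 ≤ c) (hc1 : c ≤ 1) (hs : 0 ≤ s) :
    energyDensity Φ v (c * s) ≤ c * energyDensity Φ v s := by
  have := hconv.map_mul_le_mul_of_map_zero h0 hc0 hc1 hs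
  simp only [energyDensity]
  nlinarith

variable {α : Type*} [MeasurableSpace α] {μ : Measure α} {w : α → R3} {g : α → ℝ}

lemma MeasureTheory.AEStronglyMeasurable.energyDensity (hcont : ContinuousOn Φ (Ici 0))
    (hw : Measurable w) (hg0 : ∀ a, 0 ≤ g a) (hg : AEStronglyMeasurable g μ) :
    AEStronglyMeasurable (fun a => energyDensity Φ (w a) (g a)) μ :=
  ((continuous_const.mul (continuous_norm.pow 2)).comp_aestronglyMeasurable
    hw.aestronglyMeasurable |>.mul hg).add (hcont.comp_aestronglyMeasurable_of_nonneg hg0 hg)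

lemma integrable_energyDensity_iff (hnn : ∀ s ∈ Ici (0:ℝ), 0 ≤ Φ s) (hw : Measurable w)
    (hg0 : ∀ a, 0 ≤ g a) (hg : AEStronglyMeasurable g μ) :
    Integrable (fun a => energyDensity Φ (w a) (g a)) μ ↔
      Integrable (fun a => ‖w a‖ ^ 2 * g a) μ ∧ Integrable (fun a => Φ (g a)) μ := by
  have hkin : AEStronglyMeasurable (fun a => (1/2) * ‖w a‖ ^ 2 * g a) μ :=
    ((continuous_const.mul (continuous_norm.pow 2)).comp_aestronglyMeasurable
      hw.aestronglyMeasurable).mul hg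
  have hhalf : Integrable (fun a => (1/2) * ‖w a‖ ^ 2 * g a) μ ↔
      Integrable (fun a => ‖w a‖ ^ 2 * g a) μ := by
    simp only [mul_assoc]
    exact integrable_const_mul_iff (isUnit_iff_ne_zero.2 (by norm_num)) _
  rw [← hhalf]
  exact integrable_add_iff_of_nonneg (g := fun a => Φ (g a)) hkin
    (Eventually.of_forall fun a => by have := hg0 a; positivity)
    (Eventually.of_forall fun a => hnn _ (hg0 a))

end EnergyDensity

def profileEnergies (Φ : ℝ → ℝ) (s : ℝ) : Set ℝ :=
  {r | ∃ g : R3 → ℝ, (∀ v, 0 ≤ g v) ∧ Integrable g ∧ (∫ v, g v) = s ∧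
    Integrable (fun v => energyDensity Φ v (g v)) ∧ r = ∫ v, energyDensity Φ v (g v)}

section ReducedDensity

variable {Φ : ℝ → ℝ}

lemma psiOf_eq_sInf (Φ : ℝ → ℝ) (s : ℝ) : PsiOf Φ s = sInf (profileEnergies Φ s) := rfl

lemma nonneg_of_mem_profileEnergies (hnn : ∀ s ∈ Ici (0:ℝ), 0 ≤ Φ s) {s r : ℝ}
    (hr : r ∈ profileEnergies Φ s) : 0 ≤ r := by
  obtain ⟨g, hg0, -, -, -, rfl⟩ := hr
  exact integral_nonneg fun v => energyDensity_nonneg hnn v (hg0 v)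

lemma psiOf_nonneg (hnn : ∀ s ∈ Ici (0:ℝ), 0 ≤ Φ s) (s : ℝ) : 0 ≤ PsiOf Φ s :=
  Real.sInf_nonneg fun _ => nonneg_of_mem_profileEnergies hnn

lemma psiOf_le (hnn : ∀ s ∈ Ici (0:ℝ), 0 ≤ Φ s) {s r : ℝ} (hr : r ∈ profileEnergies Φ s) :
    PsiOf Φ s ≤ r :=
  csInf_le ⟨0, fun _ => nonneg_of_mem_profileEnergies hnn⟩ hr

lemma psiOf_zero (hnn : ∀ s ∈ Ici (0:ℝ), 0 ≤ Φ s) (h0 : Φ 0 = 0) : PsiOf Φ 0 = 0 := by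
  refine le_antisymm (psiOf_le hnn ⟨0, fun _ => le_rfl, integrable_zero _ _ _, integral_zero _ _,
    ?_, ?_⟩) (psiOf_nonneg hnn 0) <;> simp [energyDensity, h0]

lemma psiOf_of_neg {s : ℝ} (hs : s < 0) : PsiOf Φ s = 0 := by
  have hempty : profileEnergies Φ s = ∅ := by
    refine eq_empty_of_forall_notMem ?_
    rintro r ⟨g, hg0, -, hgs, -⟩
    exact hs.not_ge (hgs ▸ integral_nonneg hg0)
  rw [psiOf_eq_sInf, hempty, Real.sInf_empty]

lemma profileEnergies_nonempty (h0 : Φ 0 = 0) {s : ℝ} (hs : 0 ≤ s) :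
    (profileEnergies Φ s).Nonempty := by
  set B : Set R3 := Metric.closedBall 0 1
  have hBpos : 0 < volume.real B := ENNReal.toReal_pos
    (Metric.measure_closedBall_pos volume 0 one_pos).ne' measure_closedBall_lt_top.ne
  set c : ℝ := s / volume.real B
  have hc0 : 0 ≤ c := div_nonneg hs hBpos.le
  have hE : (fun v => energyDensity Φ v (B.indicator (fun _ => c) v)) =
      B.indicator fun v => energyDensity Φ v c := by
    ext v
    by_cases hv : v ∈ B <;> simp [hv, energyDensity, h0]
  refine ⟨_, B.indicator fun _ => c, fun v => indicator_nonneg (fun _ _ => hc0) v,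
    (integrable_indicator_iff measurableSet_closedBall).2 (integrableOn_const
      measure_closedBall_lt_top.ne), ?_, ?_, rfl⟩
  · rw [integral_indicator_const _ measurableSet_closedBall, smul_eq_mul,
      mul_div_cancel₀ _ hBpos.ne']
  · rw [hE, integrable_indicator_iff measurableSet_closedBall]
    have hcont : Continuous fun v : R3 => energyDensity Φ v c := by
      unfold energyDensity
      fun_prop
    exact hcont.continuousOn.integrableOn_compact (isCompact_closedBall _ _)

end ReducedDensity

section Scaling

variable {Φ : ℝ → ℝ} {g : R3 → ℝ}

lemma MeasureTheory.Integrable.energyDensity_const_mul (hnn : ∀ s ∈ Ici (0:ℝ), 0 ≤ Φ s)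
    (hconv : ConvexOn ℝ (Ici 0) Φ) (h0 : Φ 0 = 0) (hcont : ContinuousOn Φ (Ici 0)) {c : ℝ}
    (hc0 : 0 ≤ c) (hc1 : c ≤ 1) (hg0 : ∀ v, 0 ≤ g v) (hg : AEStronglyMeasurable g)
    (hE : Integrable fun v => energyDensity Φ v (g v)) :
    Integrable fun v => energyDensity Φ v (c * g v) := by
  refine (hE.const_mul c).mono' ((hg.const_mul c).energyDensity hcont measurable_id
    fun v => mul_nonneg hc0 (hg0 v)) (Eventually.of_forall fun v => ?_)
  rw [Real.norm_of_nonneg (energyDensity_nonneg hnn v (mul_nonneg hc0 (hg0 v)))]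
  exact energyDensity_mul_le hconv h0 v hc0 hc1 (hg0 v)

lemma integral_energyDensity_const_mul_le (hconv : ConvexOn ℝ (Ici 0) Φ) (h0 : Φ 0 = 0) {c : ℝ}
    (hc0 : 0 ≤ c) (hc1 : c ≤ 1) (hg0 : ∀ v, 0 ≤ g v)
    (hE : Integrable fun v => energyDensity Φ v (g v))
    (hcE : Integrable fun v => energyDensity Φ v (c * g v)) :
    ∫ v, energyDensity Φ v (c * g v) ≤ c * ∫ v, energyDensity Φ v (g v) := by
  rw [← integral_const_mul]
  exact integral_mono hcE (hE.const_mul c) fun v => energyDensity_mul_le hconv h0 v hc0 hc1 (hg0 v)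

lemma psiOf_mul_le (hnn : ∀ s ∈ Ici (0:ℝ), 0 ≤ Φ s) (hconv : ConvexOn ℝ (Ici 0) Φ)
    (h0 : Φ 0 = 0) (hcont : ContinuousOn Φ (Ici 0)) {c s : ℝ} (hc0 : 0 ≤ c) (hc1 : c ≤ 1)
    (hs : 0 ≤ s) : PsiOf Φ (c * s) ≤ c * PsiOf Φ s := by
  rw [psiOf_eq_sInf Φ s, ← smul_eq_mul c (sInf _), ← Real.sInf_smul_of_nonneg hc0]
  refine le_csInf ((profileEnergies_nonempty h0 hs).smul_set) ?_
  rintro _ ⟨_, ⟨g, hg0, hgi, hgs, hE, rfl⟩, rfl⟩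
  have hcE := hE.energyDensity_const_mul hnn hconv h0 hcont hc0 hc1 hg0 hgi.1
  refine (psiOf_le hnn ⟨fun v => c * g v, fun v => mul_nonneg hc0 (hg0 v), hgi.const_mul c,
    by rw [integral_const_mul, hgs], hcE, rfl⟩).trans ?_
  exact integral_energyDensity_const_mul_le hconv h0 hc0 hc1 hg0 hE hcE

lemma psiOf_monotone (hnn : ∀ s ∈ Ici (0:ℝ), 0 ≤ Φ s) (hconv : ConvexOn ℝ (Ici 0) Φ)
    (h0 : Φ 0 = 0) (hcont : ContinuousOn Φ (Ici 0)) : Monotone (PsiOf Φ) := by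
  intro s' s hs's
  rcases lt_or_ge s' 0 with hs' | hs'
  · rw [psiOf_of_neg hs']
    exact psiOf_nonneg hnn s
  rcases hs'.eq_or_lt with rfl | hs'pos
  · rw [psiOf_zero hnn h0]
    exact psiOf_nonneg hnn s
  have hspos := hs'pos.trans_le hs's
  calc PsiOf Φ s' = PsiOf Φ (s' / s * s) := by rw [div_mul_cancel₀ _ hspos.ne']
    _ ≤ s' / s * PsiOf Φ s := psiOf_mul_le hnn hconv h0 hcont (by positivity)
        ((div_le_one hspos).2 hs's) hspos.le
    _ ≤ PsiOf Φ s := mul_le_of_le_one_left (psiOf_nonneg hnn s) ((div_le_one hspos).2 hs's)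

/-- Dilating a profile in velocity by `L` multiplies its mass by `L³`, its kinetic energy by
`L⁵` and its Casimir energy by `L³`. -/
lemma psiOf_pow_three_mul_le (hnn : ∀ s ∈ Ici (0:ℝ), 0 ≤ Φ s) (h0 : Φ 0 = 0) {L s : ℝ}
    (hL : 1 ≤ L) (hs : 0 ≤ s) : PsiOf Φ (L ^ 3 * s) ≤ L ^ 5 * PsiOf Φ s := by
  have hL0 : 0 < L := one_pos.trans_le hL
  have hLinv : L⁻¹ ≠ 0 := inv_ne_zero hL0.ne'
  have hdilate : ∀ F : R3 → ℝ, ∫ v, F (L⁻¹ • v) = L ^ 3 * ∫ v, F v := fun F => by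
    rw [Measure.integral_comp_inv_smul, finrank_euclideanSpace_fin, abs_of_pos (by positivity),
      smul_eq_mul]
  rw [psiOf_eq_sInf Φ s, ← smul_eq_mul (L ^ 5) (sInf _),
    ← Real.sInf_smul_of_nonneg (by positivity)]
  refine le_csInf ((profileEnergies_nonempty h0 hs).smul_set) ?_
  rintro _ ⟨_, ⟨g, hg0, hgi, hgs, hE, rfl⟩, rfl⟩
  obtain ⟨hkin, hcas⟩ := (integrable_energyDensity_iff hnn measurable_id hg0 hgi.1).1 hE
  set F : R3 → ℝ := fun w => L ^ 2 * ((1/2) * ‖w‖ ^ 2 * g w) + Φ (g w)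
  have hF : Integrable F := by
    simp only [F, mul_assoc]
    exact ((hkin.const_mul (1/2)).const_mul (L ^ 2)).add hcas
  have hEF : ∀ v : R3, energyDensity Φ v (g (L⁻¹ • v)) = F (L⁻¹ • v) := fun v => by
    simp only [energyDensity, F, norm_smul, Real.norm_of_nonneg (inv_nonneg.2 hL0.le)]
    field_simp
  have hFE : ∀ w, F w ≤ L ^ 2 * energyDensity Φ w (g w) := fun w => by
    have h1 : 1 ≤ L ^ 2 := one_le_pow₀ hL
    have h2 := hnn _ (hg0 w)
    simp only [F, energyDensity]
    nlinarith
  have hmem : ∫ v, F (L⁻¹ • v) ∈ profileEnergies Φ (L ^ 3 * s) := by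
    refine ⟨fun v => g (L⁻¹ • v), fun v => hg0 _, (integrable_comp_smul_iff volume g hLinv).2 hgi,
      by rw [hdilate, hgs], ?_, by simp only [hEF]⟩
    simpa only [hEF] using (integrable_comp_smul_iff volume F hLinv).2 hF
  calc PsiOf Φ (L ^ 3 * s) ≤ ∫ v, F (L⁻¹ • v) := psiOf_le hnn hmem
    _ = L ^ 3 * ∫ w, F w := hdilate F
    _ ≤ L ^ 3 * (L ^ 2 * ∫ w, energyDensity Φ w (g w)) := by
        rw [← integral_const_mul (L ^ 2)]
        exact mul_le_mul_of_nonneg_left (integral_mono hF (hE.const_mul _) hFE)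
          (pow_nonneg hL0.le 3)
    _ = L ^ 5 • ∫ w, energyDensity Φ w (g w) := by rw [smul_eq_mul]; ring

lemma psiOf_le_rpow_div_mul (hnn : ∀ s ∈ Ici (0:ℝ), 0 ≤ Φ s) (h0 : Φ 0 = 0) {s b : ℝ}
    (hs : 0 < s) (hsb : s ≤ b) : PsiOf Φ b ≤ (b / s) ^ (5/3 : ℝ) * PsiOf Φ s := by
  have hbs : 0 ≤ b / s := div_nonneg (hs.le.trans hsb) hs.le
  set L : ℝ := (b / s) ^ (1/3 : ℝ)
  have hL : 1 ≤ L := Real.one_le_rpow ((one_le_div hs).2 hsb) (by norm_num)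
  have hL3 : L ^ 3 = b / s := by
    rw [← Real.rpow_natCast, ← Real.rpow_mul hbs]
    norm_num
  have hL5 : L ^ 5 = (b / s) ^ (5/3 : ℝ) := by
    rw [← Real.rpow_natCast, ← Real.rpow_mul hbs]
    norm_num
  have := psiOf_pow_three_mul_le hnn h0 hL hs.le
  rwa [hL3, hL5, div_mul_cancel₀ _ hs.ne'] at this

end Scaling

lemma le_zpow_ceil_logb {β s : ℝ} (hβ : 1 < β) (hs : 0 < s) : s ≤ β ^ ⌈Real.logb β s⌉ := by
  conv_lhs => rw [← Real.rpow_logb (zero_lt_one.trans hβ) hβ.ne' hs]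
  rw [← Real.rpow_intCast]
  exact Real.rpow_le_rpow_of_exponent_le hβ.le (Int.le_ceil _)

lemma zpow_ceil_logb_le_mul {β s : ℝ} (hβ : 1 < β) (hs : 0 < s) :
    β ^ ⌈Real.logb β s⌉ ≤ β * s := by
  have hβ0 : 0 < β := zero_lt_one.trans hβ
  conv_rhs => rw [← Real.rpow_logb hβ0 hβ.ne' hs, mul_comm, ← Real.rpow_add_one hβ0.ne']
  rw [← Real.rpow_intCast]
  exact Real.rpow_le_rpow_of_exponent_le hβ.le (Int.ceil_lt_add_one _).le

section Construction

variable {Φ : ℝ → ℝ}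

lemma exists_measurable_profile_le (h0 : Φ 0 = 0) {s ε : ℝ} (hs : 0 ≤ s) (hε : 0 < ε) :
    ∃ g : R3 → ℝ, Measurable g ∧ (∀ v, 0 ≤ g v) ∧ Integrable g ∧ (∫ v, g v) = s ∧
      Integrable (fun v => energyDensity Φ v (g v)) ∧
      ∫ v, energyDensity Φ v (g v) ≤ PsiOf Φ s + ε := by
  obtain ⟨_, ⟨g, hg0, hgi, hgs, hE, rfl⟩, hlt⟩ :=
    Real.lt_sInf_add_pos (profileEnergies_nonempty h0 hs) hε
  set G : R3 → ℝ := fun v => max (hgi.1.mk g v) 0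
  have hGg : G =ᵐ[volume] g := by
    filter_upwards [hgi.1.ae_eq_mk] with v hv
    simp only [G, ← hv, max_eq_left (hg0 v)]
  have hEG : (fun v => energyDensity Φ v (G v)) =ᵐ[volume]
      fun v => energyDensity Φ v (g v) := by
    filter_upwards [hGg] with v hv
    rw [hv]
  refine ⟨G, hgi.1.stronglyMeasurable_mk.measurable.max measurable_const,
    fun v => le_max_right _ _, hgi.congr hGg.symm, by rw [integral_congr_ae hGg, hgs],
    hE.congr hEG.symm, ?_⟩
  rw [integral_congr_ae hEG]
  exact hlt.le

lemma integral_energyDensity_div_mul_le (hnn : ∀ s ∈ Ici (0:ℝ), 0 ≤ Φ s)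
    (hconv : ConvexOn ℝ (Ici 0) Φ) (h0 : Φ 0 = 0) {β ε s b : ℝ} (hs : 0 < s) (hsb : s ≤ b)
    (hbs : b ≤ β * s) {g : R3 → ℝ} (hg0 : ∀ v, 0 ≤ g v)
    (hE : Integrable fun v => energyDensity Φ v (g v))
    (hsE : Integrable fun v => energyDensity Φ v (s / b * g v))
    (hle : ∫ v, energyDensity Φ v (g v) ≤ PsiOf Φ b + ε * b) :
    ∫ v, energyDensity Φ v (s / b * g v) ≤ β ^ (5/3 : ℝ) * PsiOf Φ s + ε * s := by
  have hb : 0 < b := hs.trans_le hsb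
  have hc1 : s / b ≤ 1 := (div_le_one hb).2 hsb
  have hΨb := psiOf_nonneg hnn b
  calc ∫ v, energyDensity Φ v (s / b * g v)
      ≤ s / b * ∫ v, energyDensity Φ v (g v) :=
        integral_energyDensity_const_mul_le hconv h0 (by positivity) hc1 hg0 hE hsE
    _ ≤ s / b * (PsiOf Φ b + ε * b) := by gcongr
    _ = s / b * PsiOf Φ b + ε * s := by field_simp
    _ ≤ PsiOf Φ b + ε * s := by gcongr; exact mul_le_of_le_one_left hΨb hc1
    _ ≤ (b / s) ^ (5/3 : ℝ) * PsiOf Φ s + ε * s := by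
        gcongr; exact psiOf_le_rpow_div_mul hnn h0 hs hsb
    _ ≤ β ^ (5/3 : ℝ) * PsiOf Φ s + ε * s := by
        gcongr
        · exact psiOf_nonneg hnn s
        · exact (div_le_iff₀ hs).2 hbs

/-- Masses are rounded up to the grid `β ^ ℤ`, where countably many choices of near-optimal
profiles suffice, and the surplus is removed by scaling down. -/
lemma exists_measurable_profile_family (hnn : ∀ s ∈ Ici (0:ℝ), 0 ≤ Φ s)
    (hconv : ConvexOn ℝ (Ici 0) Φ) (h0 : Φ 0 = 0) (hcont : ContinuousOn Φ (Ici 0)) {β ε : ℝ}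
    (hβ : 1 < β) (hε : 0 < ε) :
    ∃ F : ℝ → R3 → ℝ, Measurable (Function.uncurry F) ∧ ∀ s, 0 ≤ s →
      (∀ v, 0 ≤ F s v) ∧ Integrable (F s) ∧ (∫ v, F s v) = s ∧
      Integrable (fun v => energyDensity Φ v (F s v)) ∧
      ∫ v, energyDensity Φ v (F s v) ≤ β ^ (5/3 : ℝ) * PsiOf Φ s + ε * s := by
  have hb : ∀ j : ℤ, 0 < β ^ j := zpow_pos (zero_lt_one.trans hβ)
  choose g hgm hg0 hgi hgs hE hle using
    fun j : ℤ => exists_measurable_profile_le (Φ := Φ) h0 (hb j).le (mul_pos hε (hb j))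
  set J : ℝ → ℤ := fun s => ⌈Real.logb β s⌉
  have hJ : Measurable J := Int.measurable_ceil.comp (Real.measurable_log.div_const _)
  refine ⟨fun s v => s / β ^ J s * g (J s) v, ?_, fun s hs => ?_⟩
  · have hg : Measurable fun q : R3 × ℤ => g q.2 q.1 := measurable_from_prod_countable_left hgm
    exact (measurable_fst.div ((measurable_of_countable _).comp (hJ.comp measurable_fst))).mul
      (hg.comp (measurable_snd.prodMk (hJ.comp measurable_fst)))
  rcases hs.eq_or_lt with rfl | hs
  · simp [energyDensity, h0, psiOf_zero hnn h0]
  have hc0 : 0 ≤ s / β ^ J s := div_nonneg hs.le (hb _).le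
  have hc1 : s / β ^ J s ≤ 1 := (div_le_one (hb _)).2 (le_zpow_ceil_logb hβ hs)
  have hsE := (hE (J s)).energyDensity_const_mul hnn hconv h0 hcont hc0 hc1 (hg0 _)
    (hgm _).aestronglyMeasurable
  refine ⟨fun v => mul_nonneg hc0 (hg0 _ v), (hgi _).const_mul _, ?_, hsE, ?_⟩
  · rw [integral_const_mul, hgs, div_mul_cancel₀ _ (hb _).ne']
  · exact integral_energyDensity_div_mul_le hnn hconv h0 hs (le_zpow_ceil_logb hβ hs)
      (zpow_ceil_logb_le_mul hβ hs) (hg0 _) (hE _) hsE (hle _)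

end Construction

section PhaseSpace

variable {Φ : ℝ → ℝ} {M : ℝ} {f : R3 × R3 → ℝ}

lemma integral_spatialDensity (hf : Integrable f) : ∫ x, spatialDensity f x = ∫ p, f p :=
  (integral_prod f hf).symm

lemma integral_energyDensity_eq_ekin_add_casimir
    (hkin : Integrable fun p : R3 × R3 => ‖p.2‖ ^ 2 * f p) (hcas : Integrable fun p => Φ (f p)) :
    ∫ p, energyDensity Φ p.2 (f p) = Ekin f + Casimir Φ f := by
  simp only [energyDensity, mul_assoc]
  rw [integral_add (hkin.const_mul _) hcas, integral_const_mul]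
  rfl

lemma MemFM.integrable_energyDensity (hf : MemFM Φ M f) :
    Integrable fun p => energyDensity Φ p.2 (f p) := by
  simp only [energyDensity, mul_assoc]
  exact (hf.kin_int.const_mul _).add hf.cas_int

lemma MemFM.ae_psiOf_spatialDensity_le (hnn : ∀ s ∈ Ici (0:ℝ), 0 ≤ Φ s) (hf : MemFM Φ M f) :
    ∀ᵐ x, PsiOf Φ (spatialDensity f x) ≤ ∫ v, energyDensity Φ v (f (x, v)) := by
  filter_upwards [hf.integrable.prod_right_ae, hf.integrable_energyDensity.prod_right_ae]
    with x hfx hEx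
  exact psiOf_le hnn ⟨fun v => f (x, v), fun v => hf.nonneg _, hfx, rfl, hEx, rfl⟩

lemma MemFM.memRM_spatialDensity (hnn : ∀ s ∈ Ici (0:ℝ), 0 ≤ Φ s)
    (hconv : ConvexOn ℝ (Ici 0) Φ) (h0 : Φ 0 = 0) (hcont : ContinuousOn Φ (Ici 0))
    (hf : MemFM Φ M f) : MemRM (PsiOf Φ) M (spatialDensity f) := by
  have hρ : Integrable (spatialDensity f) := hf.integrable.integral_prod_left
  refine ⟨fun x => integral_nonneg fun v => hf.nonneg _, hρ,
    (integral_spatialDensity hf.integrable).trans hf.mass, ?_⟩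
  refine hf.integrable_energyDensity.integral_prod_left.mono'
    ((psiOf_monotone hnn hconv h0 hcont).measurable.comp_aemeasurable
      hρ.1.aemeasurable).aestronglyMeasurable ?_
  filter_upwards [hf.ae_psiOf_spatialDensity_le hnn] with x hx
  rwa [Real.norm_of_nonneg (psiOf_nonneg hnn _)]

lemma MemFM.integral_psiOf_spatialDensity_le (hnn : ∀ s ∈ Ici (0:ℝ), 0 ≤ Φ s)
    (hconv : ConvexOn ℝ (Ici 0) Φ) (h0 : Φ 0 = 0) (hcont : ContinuousOn Φ (Ici 0))
    (hf : MemFM Φ M f) : ∫ x, PsiOf Φ (spatialDensity f x) ≤ Ekin f + Casimir Φ f := by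
  rw [← integral_energyDensity_eq_ekin_add_casimir hf.kin_int hf.cas_int]
  exact (integral_mono_ae (hf.memRM_spatialDensity hnn hconv h0 hcont).psi_int
    hf.integrable_energyDensity.integral_prod_left (hf.ae_psiOf_spatialDensity_le hnn)).trans_eq
    (integral_prod _ hf.integrable_energyDensity).symm

lemma memFM_of_fiberwise (hnn : ∀ s ∈ Ici (0:ℝ), 0 ≤ Φ s) (hcont : ContinuousOn Φ (Ici 0))
    {ρ B : R3 → ℝ} (hρ : Integrable ρ) (hρM : ∫ x, ρ x = M) (hB : Integrable B)
    (hf0 : ∀ p, 0 ≤ f p) (hf : AEStronglyMeasurable f) (hfi : ∀ x, Integrable fun v => f (x, v))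
    (hfρ : ∀ x, ∫ v, f (x, v) = ρ x)
    (hEi : ∀ x, Integrable fun v => energyDensity Φ v (f (x, v)))
    (hEB : ∀ x, ∫ v, energyDensity Φ v (f (x, v)) ≤ B x) :
    MemFM Φ M f ∧ spatialDensity f = ρ ∧ Ekin f + Casimir Φ f ≤ ∫ x, B x := by
  have hEm := hf.energyDensity hcont measurable_snd hf0
  have hE : Integrable fun p => energyDensity Φ p.2 (f p) := by
    refine (integrable_prod_iff hEm).2 ⟨Eventually.of_forall hEi, hB.mono'
      hEm.norm.integral_prod_right' (Eventually.of_forall fun x => ?_)⟩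
    have hEx : ∀ v, 0 ≤ energyDensity Φ v (f (x, v)) := fun v => energyDensity_nonneg hnn v (hf0 _)
    simpa only [Real.norm_of_nonneg (hEx _), Real.norm_of_nonneg (integral_nonneg hEx)]
      using hEB x
  have hfint : Integrable f := by
    refine (integrable_prod_iff hf).2 ⟨Eventually.of_forall hfi, ?_⟩
    simpa only [Real.norm_of_nonneg (hf0 _), hfρ] using hρ
  obtain ⟨hkin, hcas⟩ := (integrable_energyDensity_iff hnn measurable_snd hf0 hf).1 hE
  have hsd : spatialDensity f = ρ := funext hfρ
  refine ⟨⟨hf0, hfint, ?_, hkin, hcas⟩, hsd, ?_⟩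
  · rw [← integral_spatialDensity hfint, hsd, hρM]
  · rw [← integral_energyDensity_eq_ekin_add_casimir hkin hcas]
    exact (integral_prod _ hE).trans_le (integral_mono hE.integral_prod_left hB hEB)

lemma MemRM.exists_memFM_spatialDensity_eq (hnn : ∀ s ∈ Ici (0:ℝ), 0 ≤ Φ s)
    (hconv : ConvexOn ℝ (Ici 0) Φ) (h0 : Φ 0 = 0) (hcont : ContinuousOn Φ (Ici 0))
    {ρ : R3 → ℝ} (hρ : MemRM (PsiOf Φ) M ρ) {β ε : ℝ} (hβ : 1 < β) (hε : 0 < ε) :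
    ∃ f, MemFM Φ M f ∧ spatialDensity f = ρ ∧
      Ekin f + Casimir Φ f ≤ β ^ (5/3 : ℝ) * (∫ x, PsiOf Φ (ρ x)) + ε * M := by
  obtain ⟨F, hFm, hF⟩ := exists_measurable_profile_family hnn hconv h0 hcont hβ hε
  have hFρ := fun x => hF (ρ x) (hρ.nonneg x)
  have hf : AEStronglyMeasurable fun p : R3 × R3 => F (ρ p.1) p.2 :=
    (hFm.comp_aemeasurable (hρ.integrable.1.aemeasurable.comp_fst.prodMk
      measurable_snd.aemeasurable)).aestronglyMeasurable
  have hB : Integrable fun x => β ^ (5/3 : ℝ) * PsiOf Φ (ρ x) + ε * ρ x :=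
    (hρ.psi_int.const_mul _).add (hρ.integrable.const_mul ε)
  obtain ⟨hfM, hsd, hle⟩ := memFM_of_fiberwise hnn hcont hρ.integrable hρ.mass hB
    (fun p => (hFρ p.1).1 p.2) hf (fun x => (hFρ x).2.1) (fun x => (hFρ x).2.2.1)
    (fun x => (hFρ x).2.2.2.1) (fun x => (hFρ x).2.2.2.2)
  refine ⟨_, hfM, hsd, hle.trans_eq ?_⟩
  rw [integral_add (hρ.psi_int.const_mul _) (hρ.integrable.const_mul ε), integral_const_mul,
    integral_const_mul, hρ.mass]

end PhaseSpace

theorem project_minimizer_general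
    (Φ Φ' : ℝ → ℝ) (k k' : ℝ) (hΦ : IsPhi Φ Φ' k k') (M : ℝ)
    (f₀ : R3 × R3 → ℝ) (hf₀ : MemFM Φ M f₀)
    (hmin : ∀ g, MemFM Φ M g → HC Φ f₀ ≤ HC Φ g) :
    MemRM (PsiOf Φ) M (spatialDensity f₀) ∧
    ∀ ρ, MemRM (PsiOf Φ) M ρ → Hr (PsiOf Φ) (spatialDensity f₀) ≤ Hr (PsiOf Φ) ρ := by
  have hcont : ContinuousOn Φ (Ici 0) := fun s hs =>
    (hΦ.hasDeriv s hs).continuousAt.continuousWithinAt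
  have hconv := hΦ.sconvex.convexOn
  refine ⟨hf₀.memRM_spatialDensity hΦ.nonneg hconv hΦ.zero hcont, fun ρ hρ => ?_⟩
  set A := ∫ x, PsiOf Φ (ρ x)
  have hbound : ∀ t > 0, Hr (PsiOf Φ) (spatialDensity f₀) ≤
      (1 + t) ^ (5/3 : ℝ) * A + t * M + Epot ρ := by
    intro t ht
    obtain ⟨f, hf, hfρ, hfE⟩ := hρ.exists_memFM_spatialDensity_eq hΦ.nonneg hconv hΦ.zero hcont
      (lt_add_of_pos_right 1 ht) ht
    have h₀ := hf₀.integral_psiOf_spatialDensity_le hΦ.nonneg hconv hΦ.zero hcont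
    have h₁ := hmin f hf
    simp only [Hr, HC, hfρ] at h₁ ⊢
    linarith
  have hlim : Tendsto (fun t : ℝ => (1 + t) ^ (5/3 : ℝ) * A + t * M + Epot ρ) (𝓝[>] 0)
      (𝓝 (Hr (PsiOf Φ) ρ)) := by
    have hc : Continuous fun t : ℝ => (1 + t) ^ (5/3 : ℝ) * A + t * M + Epot ρ := by
      fun_prop (disch := norm_num)
    convert (hc.tendsto 0).mono_left nhdsWithin_le_nhds using 2
    simp [Hr, A]
  exact ge_of_tendsto hlim (eventually_nhdsWithin_of_forall hbound)

/-- if `f₀` minimizes `H_C` on `F_M`, then `ρ_{f₀} ∈ R_M`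
minimizes the reduced functional `H_r` on `R_M`. -/
theorem project_minimizer
    (Φ Φ' : ℝ → ℝ) (k k' : ℝ) (hΦ : IsPhi Φ Φ' k k') (M : ℝ) (hM : 0 < M)
    (f₀ : R3 × R3 → ℝ) (hf₀ : MemFM Φ M f₀)
    (hmin : ∀ g, MemFM Φ M g → HC Φ f₀ ≤ HC Φ g) :
    MemRM (PsiOf Φ) M (spatialDensity f₀) ∧
    ∀ ρ, MemRM (PsiOf Φ) M ρ → Hr (PsiOf Φ) (spatialDensity f₀) ≤ Hr (PsiOf Φ) ρ :=
  project_minimizer_general Φ Φ' k k' hΦ M f₀ hf₀ hmin
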